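/- Let G be a connected unicyclic graph on n vertices with α(G) + μ(G) = n − 1, with unique cycle C. Then for every vertex x ∈ N₁(C) (vertices outside C with a neighbor on C), every maximum independent set of the tree T_x extends to a maximum independent set of G; that is, for each A ∈ Ω(T_x) there exists S ∈ Ω(G) with A ⊆ S. -/

import Mathlib

/-- A set of vertices is independent if no two of its vertices are adjacent. -/
def SimpleGraph.IsIndepSet' {V : Type*} (G : SimpleGraph V) (s : Set V) : Prop :=
  s.Pairwise (fun a b => ¬ G.Adj a b)

/-- The independence number: the maximum cardinality of an independent set. -/
noncomputable def indepNum {V : Type*} (G : SimpleGraph V) : ℕ :=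
  sSup {n | ∃ s : Set V, G.IsIndepSet' s ∧ s.ncard = n}

/-- The matching number: the maximum cardinality of a matching. -/
noncomputable def matchNum {V : Type*} (G : SimpleGraph V) : ℕ :=
  sSup {n | ∃ M : SimpleGraph.Subgraph G, M.IsMatching ∧ M.edgeSet.ncard = n}

/-- A maximum independent set. -/
def IsMaxIndepSet {V : Type*} (G : SimpleGraph V) (s : Set V) : Prop :=
  G.IsIndepSet' s ∧ s.ncard = indepNum G

/-- The core: intersection of all maximum independent sets. -/
noncomputable def core {V : Type*} (G : SimpleGraph V) : Set V :=
  ⋂₀ {s | IsMaxIndepSet G s}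

/-- Open neighborhood of a set. -/
def nbhdSet {V : Type*} (G : SimpleGraph V) (s : Set V) : Set V :=
  {v | ∃ w ∈ s, G.Adj v w}

/-- Closed neighborhood of a set. -/
def closedNbhdSet {V : Type*} (G : SimpleGraph V) (s : Set V) : Set V :=
  s ∪ nbhdSet G s

/-- The tree component of `G - xy` containing `x`. -/
noncomputable def treeComp {V : Type*} (G : SimpleGraph V) (x y : V) :
    SimpleGraph ((G.deleteEdges {s(x,y)}).connectedComponentMk x).supp :=
  (G.deleteEdges {s(x,y)}).induce ((G.deleteEdges {s(x,y)}).connectedComponentMk x).supp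

/-! Let `W` be the vertex set of `T_x`. As `x` is off the cycle, `xy` is a bridge and the only
edge between `W` and `Wᶜ`; as every cycle passes through `y`, both `W` and `Wᶜ \ {y}` induce
forests. A maximum independent set `A` of `T_x` extends to a maximum independent set `A ∪ B` of
`G`, with `B` a maximum independent subset of `Wᶜ` avoiding `y` or of `Wᶜ \ {y}`, unless some
maximum independent subset of `W` avoids `x` while every maximum one of `Wᶜ` contains `y`. Then
`α(G) ≥ α(W) + α(Wᶜ \ {y}) + 1`, and the König–Egerváry inequality `|F| ≤ α(F) + μ(F)` for the
two forests gives `α(G) + μ(G) ≥ n`, contradicting `α(G) + μ(G) = n - 1`. -/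

open SimpleGraph hiding indepNum

section

variable {V : Type*} {G : SimpleGraph V} {W : Set V} {x y : V}

def IsMaxIndepSubset (G : SimpleGraph V) (U s : Set V) : Prop :=
  s ⊆ U ∧ G.IsIndepSet' s ∧ ∀ t ⊆ U, G.IsIndepSet' t → t.ncard ≤ s.ncard

lemma isIndepSet'_union_of_cut (hcut : ∀ a ∈ W, ∀ b ∉ W, G.Adj a b → a = x ∧ b = y)
    {s t : Set V} (hsW : s ⊆ W) (htW : t ⊆ Wᶜ) (hs : G.IsIndepSet' s) (ht : G.IsIndepSet' t)
    (hxt : x ∉ s ∨ y ∉ t) : G.IsIndepSet' (s ∪ t) := by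
  refine Set.pairwise_union.mpr ⟨hs, ht, fun a ha b hb _ => ?_⟩
  have hab : ¬ G.Adj a b := fun hab => by
    obtain ⟨rfl, rfl⟩ := hcut a (hsW ha) b (htW hb) hab
    tauto
  exact ⟨hab, fun hba => hab hba.symm⟩

lemma SimpleGraph.ConnectedComponent.mem_of_adj_of_mem_supp {s : Set (Sym2 V)}
    {C : (G.deleteEdges s).ConnectedComponent} {a b : V} (ha : a ∈ C.supp) (hb : b ∉ C.supp)
    (hab : G.Adj a b) : s(a, b) ∈ s := by
  by_contra h
  rw [mem_supp_iff] at ha hb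
  exact hb ((connectedComponentMk_eq_of_adj (deleteEdges_adj.mpr ⟨hab, h⟩)).symm.trans ha)

lemma treeComp_eq_induce
    (hy : y ∉ ((G.deleteEdges {s(x, y)}).connectedComponentMk x).supp) :
    treeComp G x y = G.induce ((G.deleteEdges {s(x, y)}).connectedComponentMk x).supp := by
  ext a b
  simp only [treeComp, induce_adj, deleteEdges_adj, Set.mem_singleton_iff, and_iff_left_iff_imp]
  rintro - h
  rcases Sym2.eq_iff.mp h with ⟨-, hb⟩ | ⟨ha, -⟩
  · exact hy (Set.mem_of_eq_of_mem hb.symm b.2)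
  · exact hy (Set.mem_of_eq_of_mem ha.symm a.2)

lemma isAcyclic_induce_of_forall_isCycle_mem {U : Set V} (hyU : y ∉ U)
    (hy : ∀ w (p : G.Walk w w), p.IsCycle → y ∈ p.support) : (G.induce U).IsAcyclic := by
  intro w p hp
  let f := Embedding.induce (G := G) U
  have := hy _ _ (hp.map (f := f.toHom) f.injective)
  rw [Walk.support_map, List.mem_map] at this
  obtain ⟨z, -, rfl⟩ := this
  exact hyU z.2

variable [Finite V]

lemma ncard_le_indepNum {s : Set V} (hs : G.IsIndepSet' s) : s.ncard ≤ indepNum G :=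
  le_csSup ⟨Nat.card V, by rintro _ ⟨t, -, rfl⟩; exact t.ncard_le_card⟩ ⟨s, hs, rfl⟩

lemma isMaxIndepSet_of_forall_ncard_le {S : Set V} (hS : G.IsIndepSet' S)
    (hmax : ∀ t, G.IsIndepSet' t → t.ncard ≤ S.ncard) : IsMaxIndepSet G S :=
  ⟨hS, (ncard_le_indepNum hS).antisymm <|
    csSup_le ⟨0, ∅, Set.pairwise_empty _, Set.ncard_empty V⟩ <| by
      rintro _ ⟨t, ht, rfl⟩; exact hmax t ht⟩

lemma ncard_edgeSet_le_matchNum {M : G.Subgraph} (hM : M.IsMatching) :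
    M.edgeSet.ncard ≤ matchNum G :=
  le_csSup ⟨Nat.card (Sym2 V), by rintro _ ⟨N, -, rfl⟩; exact N.edgeSet.ncard_le_card⟩
    ⟨M, hM, rfl⟩

lemma exists_isMaxIndepSubset (G : SimpleGraph V) (U : Set V) : ∃ s, IsMaxIndepSubset G U s := by
  obtain ⟨s, ⟨hsU, hs⟩, hmax⟩ := Set.exists_max_image {t | t ⊆ U ∧ G.IsIndepSet' t} Set.ncard
    (Set.toFinite _) ⟨∅, Set.empty_subset U, Set.pairwise_empty _⟩
  exact ⟨s, hsU, hs, fun t htU ht => hmax t ⟨htU, ht⟩⟩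

lemma IsMaxIndepSubset.isMaxIndepSet_union {W A B : Set V} (hA : IsMaxIndepSubset G W A)
    (hB : IsMaxIndepSubset G Wᶜ B) (hAB : G.IsIndepSet' (A ∪ B)) :
    IsMaxIndepSet G (A ∪ B) := by
  refine isMaxIndepSet_of_forall_ncard_le hAB fun t ht => ?_
  rw [Set.ncard_union_eq (Set.disjoint_of_subset hA.1 hB.1 disjoint_compl_right),
    ← Set.ncard_inter_add_ncard_sdiff_eq_ncard t W]
  have h₁ := hA.2.2 _ Set.inter_subset_right (ht.mono Set.inter_subset_left)
  have h₂ := hB.2.2 (t \ W) (fun _ h => h.2) (ht.mono Set.sdiff_subset)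
  omega

lemma IsMaxIndepSubset.ncard_sdiff_singleton_add_one {U B B₁ : Set V} {y : V}
    (hB : IsMaxIndepSubset G U B) (hB₁ : IsMaxIndepSubset G (U \ {y}) B₁)
    (hy : ∀ B', IsMaxIndepSubset G U B' → y ∈ B') : B₁.ncard + 1 = B.ncard := by
  have hle : (B \ {y}).ncard ≤ B₁.ncard :=
    hB₁.2.2 _ (Set.sdiff_subset_sdiff_left hB.1) (hB.2.1.mono Set.sdiff_subset)
  have hlt : B₁.ncard < B.ncard := by
    refine (hB.2.2 B₁ (hB₁.1.trans Set.sdiff_subset) hB₁.2.1).lt_of_ne fun h => ?_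
    exact (hB₁.1 (hy B₁ ⟨hB₁.1.trans Set.sdiff_subset, hB₁.2.1, h ▸ hB.2.2⟩)).2 rfl
  have := Set.ncard_sdiff_singleton_add_one (hy B hB)
  omega

lemma isMaxIndepSubset_image_val {U : Set V} {A : Set U}
    (hA : IsMaxIndepSet (G.induce U) A) : IsMaxIndepSubset G U (Subtype.val '' A) := by
  refine ⟨Subtype.coe_image_subset U A, ?_, fun t htU ht => ?_⟩
  · rintro _ ⟨a, ha, rfl⟩ _ ⟨b, hb, rfl⟩ hne
    exact hA.1 ha hb (ne_of_apply_ne _ hne)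
  · have hind : (G.induce U).IsIndepSet' (Subtype.val ⁻¹' t) :=
      fun a ha b hb hne => ht ha hb (Subtype.val_injective.ne hne)
    have hpre : (Subtype.val ⁻¹' t : Set U).ncard = t.ncard :=
      Set.ncard_preimage_of_injective_subset_range Subtype.val_injective (by simpa using htU)
    rw [Set.ncard_image_of_injective A Subtype.val_injective, hA.2, ← hpre]
    exact ncard_le_indepNum hind

lemma exists_isMaxIndepSet_superset_or_ncard_add_lt
    (hcut : ∀ a ∈ W, ∀ b ∉ W, G.Adj a b → a = x ∧ b = y) (hxy : G.Adj x y) {A : Set V}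
    (hA : IsMaxIndepSubset G W A) :
    (∃ S, IsMaxIndepSet G S ∧ A ⊆ S) ∨
      ∀ s ⊆ W, ∀ t ⊆ Wᶜ \ {y}, G.IsIndepSet' s → G.IsIndepSet' t →
        s.ncard + t.ncard < indepNum G := by
  obtain ⟨B, hB⟩ := exists_isMaxIndepSubset G Wᶜ
  obtain ⟨B₁, hB₁⟩ := exists_isMaxIndepSubset G (Wᶜ \ {y})
  have hB₁W : B₁ ⊆ Wᶜ := hB₁.1.trans Set.sdiff_subset
  have hyB₁ : y ∉ B₁ := fun h => (hB₁.1 h).2 rfl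
  by_cases hB' : ∃ B', IsMaxIndepSubset G Wᶜ B' ∧ y ∉ B'
  · obtain ⟨B', hB', hyB'⟩ := hB'
    exact .inl ⟨A ∪ B', hA.isMaxIndepSet_union hB'
      (isIndepSet'_union_of_cut hcut hA.1 hB'.1 hA.2.1 hB'.2.1 (.inr hyB')),
      Set.subset_union_left⟩
  push Not at hB'
  have hBB₁ := hB.ncard_sdiff_singleton_add_one hB₁ hB'
  by_cases hA' : ∃ A', IsMaxIndepSubset G W A' ∧ x ∉ A'
  · obtain ⟨A', hA', hxA'⟩ := hA'
    refine .inr fun s hsW t ht hs ht' => ?_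
    have hA'B := ncard_le_indepNum
      (isIndepSet'_union_of_cut hcut hA'.1 hB.1 hA'.2.1 hB.2.1 (.inl hxA'))
    rw [Set.ncard_union_eq (Set.disjoint_of_subset hA'.1 hB.1 disjoint_compl_right)] at hA'B
    have h₁ := hA'.2.2 s hsW hs
    have h₂ := hB₁.2.2 t ht ht'
    have h₃ := hA.2.2 A' hA'.1 hA'.2.1
    have h₄ := hA'.2.2 A hA.1 hA.2.1
    omega
  push Not at hA'
  refine .inl ⟨A ∪ B₁, isMaxIndepSet_of_forall_ncard_le
    (isIndepSet'_union_of_cut hcut hA.1 hB₁W hA.2.1 hB₁.2.1 (.inr hyB₁)) fun T hT => ?_,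
    Set.subset_union_left⟩
  rw [Set.ncard_union_eq (Set.disjoint_of_subset hA.1 hB₁W disjoint_compl_right),
    ← Set.ncard_inter_add_ncard_sdiff_eq_ncard T W]
  have hTW := hA.2.2 _ Set.inter_subset_right (hT.mono Set.inter_subset_left)
  by_cases hxT : x ∈ T
  · have hyT : y ∉ T := fun hyT => hT hxT hyT hxy.ne hxy
    have := hB₁.2.2 (T \ W) (fun z hz => ⟨hz.2, fun h => hyT (h ▸ hz.1)⟩)
      (hT.mono Set.sdiff_subset)
    omega
  · have hlt : (T ∩ W).ncard < A.ncard := hTW.lt_of_ne fun h =>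
      hxT (hA' (T ∩ W) ⟨Set.inter_subset_right, hT.mono Set.inter_subset_left, h ▸ hA.2.2⟩).1
    have := hB.2.2 (T \ W) (fun _ hz => hz.2) (hT.mono Set.sdiff_subset)
    omega

/-- The first vertex of a longest path is a leaf. -/
lemma SimpleGraph.IsAcyclic.exists_adj_forall_adj_eq {H : SimpleGraph V}
    (h : H.IsAcyclic) {a b : V} (hab : H.Adj a b) :
    ∃ u w, H.Adj u w ∧ ∀ z, H.Adj u z → z = w := by
  have : Nonempty V := ⟨a⟩
  obtain ⟨u, v, p, hp, hmax⟩ := Walk.exists_isPath_forall_isPath_length_le_length H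
  have hnil : ¬ p.Nil := fun hnil => by
    simpa [Walk.length_eq_zero_iff.mpr hnil] using hmax _ _ hab.toWalk (by simp [hab.ne])
  refine ⟨u, p.snd, p.adj_snd hnil, fun z hz => h.eq_snd_of_adj_start hp hz ?_⟩
  by_contra hzp
  simpa using hmax _ _ (p.cons hz.symm) (hp.cons hzp)

lemma SimpleGraph.Subgraph.ncard_edgeSet_sup {M₁ M₂ : G.Subgraph}
    (hd : Disjoint M₁.support M₂.support) :
    (M₁ ⊔ M₂).edgeSet.ncard = M₁.edgeSet.ncard + M₂.edgeSet.ncard := by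
  refine Subgraph.edgeSet_sup ▸ Set.ncard_union_eq (Set.disjoint_left.mpr fun e h₁ h₂ => ?_)
  induction e using Sym2.ind with
  | _ a b => exact hd.notMem_of_mem_left (M₁.mem_support.mpr ⟨b, h₁⟩) (M₂.mem_support.mpr ⟨b, h₂⟩)

/-- The König–Egerváry inequality `|U| ≤ α + μ` for a forest, proved by removing a leaf together
with its neighbour. -/
lemma exists_indep_matching_of_isAcyclic_induce (U : Set V)
    (hU : (G.induce U).IsAcyclic) :
    ∃ s ⊆ U, G.IsIndepSet' s ∧ ∃ M : G.Subgraph,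
      M.IsMatching ∧ M.support ⊆ U ∧ U.ncard ≤ s.ncard + M.edgeSet.ncard := by
  induction hn : U.ncard using Nat.strong_induction_on generalizing U with
  | _ n ih =>
  by_cases hedge : ∃ a ∈ U, ∃ b ∈ U, G.Adj a b
  swap
  · push Not at hedge
    refine ⟨U, subset_rfl, fun a ha b hb _ => hedge a ha b hb, ⊥, ?_, ?_, by simp [hn]⟩
    · simp [Subgraph.IsMatching]
    · simp [Subgraph.support]
  obtain ⟨a, ha, b, hb, hab⟩ := hedge
  obtain ⟨⟨u, hu⟩, ⟨w, hw⟩, huw, hleaf⟩ :=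
    hU.exists_adj_forall_adj_eq (a := ⟨a, ha⟩) (b := ⟨b, hb⟩) hab
  simp only [induce_adj, Subtype.forall, Subtype.mk.injEq] at huw hleaf
  have hpair : ({u, w} : Set V) ⊆ U := Set.insert_subset hu (Set.singleton_subset_iff.mpr hw)
  have hcard : (U \ {u, w}).ncard + 2 = n := by
    rw [← hn, ← Set.ncard_pair huw.ne, Set.ncard_sdiff_add_ncard_of_subset hpair]
  obtain ⟨s, hsU, hs, M, hM, hMU, hle⟩ := ih _ (by omega) (U \ {u, w})
    (hU.embedding (induceHomOfLE G Set.sdiff_subset)) rfl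
  have hus : u ∉ s := fun h => (hsU h).2 (.inl rfl)
  have hd : Disjoint M.support (G.subgraphOfAdj huw).support := by
    rw [support_subgraphOfAdj]
    exact Set.disjoint_of_subset_left hMU Set.disjoint_sdiff_left
  refine ⟨insert u s, Set.insert_subset hu (hsU.trans Set.sdiff_subset), ?_,
    M ⊔ G.subgraphOfAdj huw, hM.sup (.subgraphOfAdj huw) hd, ?_, ?_⟩
  · refine Set.pairwise_insert.mpr ⟨hs, fun z hz _ => ?_⟩
    have hzw : z ≠ w := fun h => (hsU hz).2 (.inr h)
    exact ⟨fun h => hzw (hleaf z (hsU hz).1 h), fun h => hzw (hleaf z (hsU hz).1 h.symm)⟩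
  · rintro z ⟨z', hz | hz⟩
    · exact (hMU ⟨z', hz⟩).1
    · exact hpair (support_subgraphOfAdj huw ▸ ⟨z', hz⟩)
  · rw [Subgraph.ncard_edgeSet_sup hd, Set.ncard_insert_of_notMem hus, edgeSet_subgraphOfAdj,
      Set.ncard_singleton]
    omega

lemma ncard_add_ncard_lt_indepNum_add_matchNum {U₁ U₂ : Set V}
    (hd : Disjoint U₁ U₂) (h₁ : (G.induce U₁).IsAcyclic) (h₂ : (G.induce U₂).IsAcyclic)
    (hα : ∀ s ⊆ U₁, ∀ t ⊆ U₂, G.IsIndepSet' s → G.IsIndepSet' t →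
      s.ncard + t.ncard < indepNum G) :
    U₁.ncard + U₂.ncard < indepNum G + matchNum G := by
  obtain ⟨s₁, hs₁U, hs₁, M₁, hM₁, hM₁U, hle₁⟩ := exists_indep_matching_of_isAcyclic_induce U₁ h₁
  obtain ⟨s₂, hs₂U, hs₂, M₂, hM₂, hM₂U, hle₂⟩ := exists_indep_matching_of_isAcyclic_induce U₂ h₂
  have hM : Disjoint M₁.support M₂.support := hd.mono hM₁U hM₂U
  have hμ := ncard_edgeSet_le_matchNum (hM₁.sup hM₂ hM)
  rw [Subgraph.ncard_edgeSet_sup hM] at hμ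
  have := hα s₁ hs₁U s₂ hs₂U hs₁ hs₂
  omega

/-- Deleting a non-bridge edge leaves a connected graph with one edge fewer than vertices,
i.e. a tree. -/
lemma mem_edges_of_not_isBridge (hconn : G.Connected)
    (huni : G.edgeSet.ncard = Nat.card V) {u : V} {c : G.Walk u u} (hc : c.IsCycle) {a b : V}
    (hab : G.Adj a b) (hbr : ¬ G.IsBridge s(a, b)) : s(a, b) ∈ c.edges := by
  by_contra hc'
  have hcard : Nat.card (G.deleteEdges {s(a, b)}).edgeSet + 1 = Nat.card V := by
    rw [Nat.card_coe_set_eq, edgeSet_deleteEdges,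
      Set.ncard_sdiff_singleton_add_one (G.mem_edgeSet.mpr hab), huni]
  have htree := isTree_iff_connected_and_card.mpr
    ⟨hconn.connected_delete_edge_of_not_isBridge hbr, hcard⟩
  refine htree.isAcyclic _ (hc.toDeleteEdges _ {s(a, b)} fun e he h => hc' ?_)
  rwa [← Set.mem_singleton_iff.mp h]

lemma support_subset_support_of_isCycle (hconn : G.Connected)
    (huni : G.edgeSet.ncard = Nat.card V) {u w : V} {c : G.Walk u u} {c' : G.Walk w w}
    (hc : c.IsCycle) (hc' : c'.IsCycle) : c.support ⊆ c'.support := by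
  classical
  intro z hz
  set d := c.rotate z hz
  have hd : d.IsCycle := hc.rotate hz
  have hnil : ¬ d.Nil := hd.not_nil
  have hedge := d.mk_start_snd_mem_edges hnil
  have hbr : ¬ G.IsBridge s(z, d.snd) := fun hbr => hbr.notMem_edges_of_isCycle hd hedge
  exact c'.fst_mem_support_of_mem_edges
    (mem_edges_of_not_isBridge hconn huni hc' (d.adj_snd hnil) hbr)

end

theorem stmt16 {V : Type*} [Fintype V] (G : SimpleGraph V)
    (hconn : G.Connected) (huni : G.edgeSet.ncard = Fintype.card V)
    {v : V} (c : G.Walk v v) (hc : c.IsCycle)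
    (hsum : indepNum G + matchNum G = Fintype.card V - 1)
    (x y : V) (hx : x ∉ c.support) (hy : y ∈ c.support) (hadj : G.Adj x y) :
    ∀ A : Set ((G.deleteEdges {s(x,y)}).connectedComponentMk x).supp,
      IsMaxIndepSet (treeComp G x y) A →
        ∃ S : Set V, IsMaxIndepSet G S ∧ Subtype.val '' A ⊆ S := by
  intro A hA
  set W := ((G.deleteEdges {s(x,y)}).connectedComponentMk x).supp
  rw [← Nat.card_eq_fintype_card] at huni hsum
  have hyW : y ∉ W := fun hyW => hx <| c.fst_mem_support_of_mem_edges <|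
    mem_edges_of_not_isBridge hconn huni hc hadj fun hbr =>
      isBridge_iff.mp hbr (ConnectedComponent.exact hyW).symm
  have hcut : ∀ a ∈ W, ∀ b ∉ W, G.Adj a b → a = x ∧ b = y := fun a ha b hb hab => by
    rcases Sym2.eq_iff.mp (ConnectedComponent.mem_of_adj_of_mem_supp (s := {s(x, y)}) ha hb hab)
      with h | ⟨rfl, -⟩
    · exact h
    · exact absurd ha hyW
  rw [treeComp_eq_induce hyW] at hA
  have hA' := isMaxIndepSubset_image_val hA
  refine (exists_isMaxIndepSet_superset_or_ncard_add_lt hcut hadj hA').resolve_right fun hlt => ?_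
  have hthrough : ∀ w (p : G.Walk w w), p.IsCycle → y ∈ p.support :=
    fun _ _ hp => support_subset_support_of_isCycle hconn huni hc hp hy
  have := ncard_add_ncard_lt_indepNum_add_matchNum
    (disjoint_compl_right.mono_right Set.sdiff_subset)
    (isAcyclic_induce_of_forall_isCycle_mem hyW hthrough)
    (isAcyclic_induce_of_forall_isCycle_mem (U := Wᶜ \ {y}) (fun h => h.2 rfl) hthrough) hlt
  have hWc : W.ncard + (Wᶜ \ {y}).ncard + 1 = Nat.card V := by
    rw [add_assoc, Set.ncard_sdiff_singleton_add_one hyW, Set.ncard_add_ncard_compl]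
  omega
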